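/- Let k ≥ 2 and n ≥ 2 and let A be the directed adjacency matrix of the corresponding graph G_k^n. Then A^(n-1) + A^(n-2) = J, where J is the all-ones matrix of the same size as A. -/

import Mathlib

/-- A word `w` of length `m` over the alphabet `Fin k` is adjacency-hopping if
`w i ≠ w (i+1)` for all `i` with `i + 1 < m`. -/
def IsAdjHop (k m : ℕ) (w : Fin m → Fin k) : Prop :=
  ∀ i : ℕ, (h : i + 1 < m) → w ⟨i, by omega⟩ ≠ w ⟨i + 1, h⟩

/-- The vertex set of the corresponding graph `G_k^n`: all adjacency-hopping words of
length `n - 1` over `Fin k`. -/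
abbrev Vtx (k n : ℕ) : Type := {w : Fin (n - 1) → Fin k // IsAdjHop k (n - 1) w}

/-- The edge relation of `G_k^n`: there is an edge from `u` to `v` iff `v j = u (j+1)`
for all `j` with `j + 1 ≤ n - 2`, and the last letter of `u` differs from the last
letter of `v`. -/
def Edge (k n : ℕ) (u v : Vtx k n) : Prop :=
  (∀ j : ℕ, (h : j + 1 ≤ n - 2) → v.1 ⟨j, by omega⟩ = u.1 ⟨j + 1, by omega⟩) ∧
  ∀ h : n - 2 < n - 1, u.1 ⟨n - 2, h⟩ ≠ v.1 ⟨n - 2, h⟩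

noncomputable instance (k n : ℕ) : Fintype (Vtx k n) := Fintype.ofFinite _

open Classical in
/-- The directed adjacency matrix of `G_k^n` over `ℚ`. -/
noncomputable def AdjMat (k n : ℕ) : Matrix (Vtx k n) (Vtx k n) ℚ :=
  Matrix.of fun u v => if Edge k n u v then 1 else 0


/-!
A walk of length `t` from `u` to `v` in `G_k^n` spells an adjacency-hopping word of length
`n - 1 + t` that starts with `u` and ends with `v`, and for `t ≤ n - 1` the walk is determined
by `u` and `v`. So `A^(n-1) u v = 1` iff `u` and `v` can be glued side by side, i.e. the last
letter of `u` differs from the first letter of `v`, while `A^(n-2) u v = 1` iff they overlap in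
one letter, i.e. the last letter of `u` equals the first letter of `v`. Exactly one of the two
happens.
-/

open Classical in
theorem Matrix.of_ite_mul_of_ite {ι R : Type*} [Fintype ι] [NonAssocSemiring R]
    {P Q : ι → ι → Prop}
    (huniq : ∀ u v w w', P u w → Q w v → P u w' → Q w' v → w = w') :
    (Matrix.of fun u v => if P u v then (1 : R) else 0) *
        Matrix.of (fun u v => if Q u v then 1 else 0) =
      Matrix.of fun u v => if ∃ w, P u w ∧ Q w v then 1 else 0 := by
  ext u v
  simp only [Matrix.mul_apply, Matrix.of_apply, ite_zero_mul_ite_zero, mul_one]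
  split_ifs with h
  · obtain ⟨w, hw⟩ := h
    rw [Finset.sum_eq_single w (fun w' _ hw' => if_neg fun h' => hw' <|
      huniq u v w' w h'.1 h'.2 hw.1 hw.2) (by simp), if_pos hw]
  · exact Finset.sum_eq_zero fun w _ => if_neg fun hw => h ⟨w, hw⟩

namespace HoppingGraph

variable {k m : ℕ}

theorem apply_mk_congr {N : ℕ} {α : Type*} (w : Fin N → α) {a b : ℕ} {ha : a < N}
    {hb : b < N} (hab : a = b) : w ⟨a, ha⟩ = w ⟨b, hb⟩ := by
  subst hab; rfl

theorem vtx_ext {n : ℕ} {u v : Vtx k n}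
    (h : ∀ i : ℕ, (hi : i < n - 1) → u.1 ⟨i, hi⟩ = v.1 ⟨i, hi⟩) : u = v :=
  Subtype.ext <| funext fun i => h i.1 i.2

/-- `(A ^ t) u v = 1` exactly when `Overlap t u v`, i.e. when `u` followed by the last `t`
letters of `v` is an adjacency-hopping word ending in `v`. -/
def Overlap (t : ℕ) (ht : t ≤ m + 1) (u v : Vtx k (m + 2)) : Prop :=
  (∀ j : ℕ, (hj : j + t ≤ m) → v.1 ⟨j, by omega⟩ = u.1 ⟨j + t, by omega⟩) ∧
  u.1 ⟨t - 1, by omega⟩ ≠ v.1 ⟨0, by omega⟩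

theorem Overlap.apply_zero {t : ℕ} (ht : t ≤ m) {u w : Vtx k (m + 2)}
    (h : Overlap t (by omega) u w) : w.1 ⟨0, by omega⟩ = u.1 ⟨t, by omega⟩ :=
  (h.1 0 (by omega)).trans (apply_mk_congr u.1 (by omega))

theorem edge_iff_overlap_one (u v : Vtx k (m + 2)) :
    Edge k (m + 2) u v ↔ Overlap 1 (by omega) u v := by
  refine and_congr_right fun hshift => ?_
  rcases Nat.eq_zero_or_pos m with rfl | hm
  · exact ⟨fun h => h (by omega), fun h _ => h⟩
  have hlast : ∀ h, u.1 ⟨m + 2 - 2, h⟩ ≠ v.1 ⟨m + 2 - 2, h⟩ := fun _ hu =>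
    v.2 (m - 1) (by omega) ((hshift (m - 1) (by omega)).trans ((apply_mk_congr u.1 (by omega)).trans
      (hu.trans (apply_mk_congr v.1 (by omega)))))
  have hfirst : u.1 ⟨1 - 1, by omega⟩ ≠ v.1 ⟨0, by omega⟩ := fun hu =>
    u.2 0 (by omega) (hu.trans (hshift 0 (by omega)))
  exact iff_of_true hlast hfirst

/-- The word `u t, v 0, …, v (m - 1)`: the only possible last-but-one vertex of a walk of
length `t + 1` from `u` to `v` when `1 ≤ t ≤ m`. -/
def midWord (t : ℕ) (ht : t ≤ m) (u v : Vtx k (m + 2)) : Fin (m + 2 - 1) → Fin k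
  | ⟨0, _⟩ => u.1 ⟨t, by omega⟩
  | ⟨i + 1, hi⟩ => v.1 ⟨i, by omega⟩

section midWord

variable {t : ℕ} {ht : t ≤ m} {u v : Vtx k (m + 2)}

theorem isAdjHop_midWord (h : Overlap (t + 1) (by omega) u v) :
    IsAdjHop k (m + 2 - 1) (midWord t ht u v) := by
  intro i hi
  cases i with
  | zero => exact h.2
  | succ i => exact v.2 i (by omega)

theorem overlap_midWord (ht1 : 1 ≤ t) (h : Overlap (t + 1) (by omega) u v) :
    Overlap t (by omega) u ⟨midWord t ht u v, isAdjHop_midWord h⟩ := by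
  refine ⟨fun j hj => ?_, fun hu => ?_⟩
  · cases j with
    | zero => exact apply_mk_congr u.1 (by omega)
    | succ j => exact (h.1 j (by omega)).trans (apply_mk_congr u.1 (by omega))
  · exact u.2 (t - 1) (by omega) (hu.trans (apply_mk_congr u.1 (by omega)))

theorem edge_midWord (ht1 : 1 ≤ t) (h : Overlap (t + 1) (by omega) u v) :
    Edge k (m + 2) ⟨midWord t ht u v, isAdjHop_midWord h⟩ v := by
  refine ⟨fun j hj => rfl, fun hlt hu => v.2 (m - 1) (by omega) ?_⟩
  calc v.1 ⟨m - 1, by omega⟩ = midWord t ht u v ⟨m - 1 + 1, by omega⟩ := rfl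
    _ = midWord t ht u v ⟨m + 2 - 2, hlt⟩ := apply_mk_congr _ (by omega)
    _ = v.1 ⟨m + 2 - 2, hlt⟩ := hu
    _ = v.1 ⟨m - 1 + 1, by omega⟩ := apply_mk_congr _ (by omega)

theorem eq_midWord_of_edge {w : Vtx k (m + 2)} (hw0 : w.1 ⟨0, by omega⟩ = u.1 ⟨t, by omega⟩)
    (hwv : Edge k (m + 2) w v) : w.1 = midWord t ht u v := by
  funext ⟨i, hi⟩
  cases i with
  | zero => exact hw0
  | succ i => exact (hwv.1 i (by omega)).symm

end midWord

theorem overlap_succ_iff {t : ℕ} (ht1 : 1 ≤ t) (ht : t ≤ m) {u v : Vtx k (m + 2)} :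
    Overlap (t + 1) (by omega) u v ↔ ∃ w, Overlap t (by omega) u w ∧ Edge k (m + 2) w v := by
  refine ⟨fun h => ⟨_, overlap_midWord (ht := ht) ht1 h, edge_midWord ht1 h⟩, ?_⟩
  rintro ⟨w, hw, hwv⟩
  have hw1 : v.1 ⟨0, by omega⟩ = w.1 ⟨1, by omega⟩ := hwv.1 0 (by omega)
  refine ⟨fun j hj => (hwv.1 j (by omega)).trans ((hw.1 (j + 1) (by omega)).trans
    (apply_mk_congr u.1 (by omega))), fun hu => w.2 0 (by omega) ?_⟩
  exact (hw.apply_zero ht).trans (hu.trans hw1)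

theorem overlap_edge_unique {t : ℕ} (ht : t ≤ m) {u v w w' : Vtx k (m + 2)}
    (hw : Overlap t (by omega) u w) (hwv : Edge k (m + 2) w v)
    (hw' : Overlap t (by omega) u w') (hw'v : Edge k (m + 2) w' v) : w = w' :=
  Subtype.ext <| (eq_midWord_of_edge (ht := ht) (hw.apply_zero ht) hwv).trans
    (eq_midWord_of_edge (hw'.apply_zero ht) hw'v).symm

open Classical in
theorem adjMat_pow_eq {t : ℕ} (ht1 : 1 ≤ t) (ht : t ≤ m + 1) :
    AdjMat k (m + 2) ^ t = Matrix.of fun u v => if Overlap t ht u v then 1 else 0 := by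
  induction t, ht1 using Nat.le_induction with
  | base =>
    ext u v
    rw [pow_one, AdjMat, Matrix.of_apply, Matrix.of_apply]
    exact if_congr (edge_iff_overlap_one u v) rfl rfl
  | succ t ht1 ih =>
    rw [pow_succ, ih (by omega), AdjMat, Matrix.of_ite_mul_of_ite]
    · ext u v
      exact if_congr (overlap_succ_iff ht1 (by omega)).symm rfl rfl
    · exact fun u v w w' => overlap_edge_unique (by omega)

open Classical in
theorem adjMat_pow_succ_apply (u v : Vtx k (m + 2)) :
    (AdjMat k (m + 2) ^ (m + 1)) u v =
      if u.1 ⟨m, by omega⟩ = v.1 ⟨0, by omega⟩ then 0 else 1 := by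
  rw [adjMat_pow_eq (by omega) le_rfl, Matrix.of_apply]
  have hoverlap : Overlap (m + 1) le_rfl u v ↔ u.1 ⟨m, by omega⟩ ≠ v.1 ⟨0, by omega⟩ :=
    ⟨fun h => h.2, fun h => ⟨fun j hj => absurd hj (by omega), h⟩⟩
  exact (if_congr hoverlap rfl rfl).trans (ite_not _ _ _)

open Classical in
theorem adjMat_pow_apply (u v : Vtx k (m + 2)) :
    (AdjMat k (m + 2) ^ m) u v =
      if u.1 ⟨m, by omega⟩ = v.1 ⟨0, by omega⟩ then 1 else 0 := by
  rcases Nat.eq_zero_or_pos m with rfl | hm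
  · rw [pow_zero, Matrix.one_apply]
    refine if_congr ⟨fun h => by rw [h], fun h => vtx_ext fun i hi => ?_⟩ rfl rfl
    obtain rfl : i = 0 := by omega
    exact h
  rw [adjMat_pow_eq hm (by omega), Matrix.of_apply]
  refine if_congr ⟨fun h => (h.apply_zero le_rfl).symm,
    fun h => ⟨fun j hj => ?_, fun hu => ?_⟩⟩ rfl rfl
  · obtain rfl : j = 0 := by omega
    exact h.symm.trans (apply_mk_congr u.1 (by omega))
  · exact u.2 (m - 1) (by omega) (hu.trans (h.symm.trans (apply_mk_congr u.1 (by omega))))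

end HoppingGraph

open HoppingGraph in
theorem stmt_2_general (k n : ℕ) (hn : 2 ≤ n) :
    AdjMat k n ^ (n - 1) + AdjMat k n ^ (n - 2) =
      Matrix.of fun _ _ => (1 : ℚ) := by
  obtain ⟨m, rfl⟩ : ∃ m, n = m + 2 := ⟨n - 2, by omega⟩
  change AdjMat k (m + 2) ^ (m + 1) + AdjMat k (m + 2) ^ m = _
  ext u v
  rw [Matrix.add_apply, adjMat_pow_succ_apply, adjMat_pow_apply, Matrix.of_apply]
  split_ifs <;> norm_num

/-- `A^(n-1) + A^(n-2) = J`, the all-ones matrix. -/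
theorem stmt_2 (k n : ℕ) (hk : 2 ≤ k) (hn : 2 ≤ n) :
    AdjMat k n ^ (n - 1) + AdjMat k n ^ (n - 2) =
      Matrix.of fun _ _ => (1 : ℚ) :=
  stmt_2_general k n hn
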